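/- There is an absolute constant C > 0 such that the following holds. Let F ⊆ {0,1}^X have finite VC dimension d ≥ 1 and let k ≥ 1. Define the class G ⊆ {0,1}^{X^k × ℝ} by G = {g_f : f ∈ F}, where g_f((x_1,…,x_k), α) = 1{(1/k)·Σ_{j=1}^k f(x_j) ≠ α}. Then the VC dimension of G is at most C·d·log(2k). -/

import Mathlib

open MeasureTheory Finset
open scoped ENNReal NNReal

noncomputable section

namespace LLP

/-- Real value of a Boolean label/prediction (`0` or `1`). -/
def bval (b : Bool) : ℝ := if b then 1 else 0

/-- Label proportion `α` of a bag of `k` labeled examples. -/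
def labelProp {X : Type*} {k : ℕ} (bag : Fin k → X × Bool) : ℝ :=
  (∑ j, bval (bag j).2) / (k : ℝ)

/-- Average prediction `(1/k)·Σ_j f(x_j)` of `f` on a bag. -/
def predProp {X : Type*} {k : ℕ} (f : X → Bool) (bag : Fin k → X × Bool) : ℝ :=
  (∑ j, bval (f (bag j).1)) / (k : ℝ)

/-- Instance-level classification loss `L(f) = Pr_{(x,y)∼D}[f(x) ≠ y]`. -/
def err {X : Type*} [MeasurableSpace X] (D : Measure (X × Bool)) (f : X → Bool) : ℝ :=
  (D {p | f p.1 ≠ p.2}).toReal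

/-- `S` is shattered by the Boolean-valued class `F`. -/
def Shatters {Z : Type*} (F : Set (Z → Bool)) (S : Finset Z) : Prop :=
  ∀ T ⊆ S, ∃ f ∈ F, ∀ z ∈ S, (f z = true ↔ z ∈ T)

/-- The VC dimension of `F` is at most `d`. -/
def VCDimLE {Z : Type*} (F : Set (Z → Bool)) (d : ℕ) : Prop :=
  ∀ S : Finset Z, Shatters F S → S.card ≤ d

/-- Joint distribution of `n` i.i.d. bags, each consisting of `k` i.i.d. draws from `D`. -/
def bagMeasure {X : Type*} [MeasurableSpace X] (D : Measure (X × Bool)) (n k : ℕ) :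
    Measure (Fin n → Fin k → X × Bool) :=
  Measure.pi fun _ => Measure.pi fun _ => D

/-- Empirical proportional (0-1) risk: fraction of bags whose predicted proportion
mismatches the observed label proportion. -/
def empPM {X : Type*} {n k : ℕ} (f : X → Bool) (ω : Fin n → Fin k → X × Bool) : ℝ :=
  (∑ i, if predProp f (ω i) = labelProp (ω i) then (0 : ℝ) else 1) / (n : ℝ)

/-- Empirical proportional square loss. -/
def empSQ {X : Type*} {n k : ℕ} (f : X → Bool) (ω : Fin n → Fin k → X × Bool) : ℝ :=
  (∑ i, (predProp f (ω i) - labelProp (ω i)) ^ 2) / (n : ℝ)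

/-- The EasyLLP estimate of the 0-1 loss on a single bag, using marginal label
proportion `p`. -/
def ellEZ {X : Type*} {k : ℕ} (p : ℝ) (f : X → Bool) (bag : Fin k → X × Bool) : ℝ :=
  ((k : ℝ) * (labelProp bag - p) + p) * (1 - predProp f bag)
    + ((k : ℝ) * (p - labelProp bag) + (1 - p)) * predProp f bag

/-- Marginal label proportion `p = Pr[y = 1]`. -/
def labelP {X : Type*} [MeasurableSpace X] (D : Measure (X × Bool)) : ℝ :=
  (D {q | q.2 = true}).toReal

end LLP

namespace LLP

/-- The proportion-mismatch class `G = {g_f : f ∈ F}` on bags with proportions, where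
`g_f((x_1,…,x_k), α) = 1{(1/k)·Σ_j f(x_j) ≠ α}`. -/
def mismatchClass {X : Type*} (F : Set (X → Bool)) (k : ℕ) :
    Set ((Fin k → X) × ℝ → Bool) :=
  {g | ∃ f ∈ F, g = fun Bα => decide ((∑ j, bval (f (Bα.1 j))) / (k : ℝ) ≠ Bα.2)}

/-!
Let `P` be the set of at most `k·|S|` points occurring in the bags of a set `S` shattered by
`G = {g_f}`. On `S`, `g_f` only depends on the trace of `f` on `P`, so by the Sauer–Shelah lemma
`2^|S| ≤ #traces of F on P ≤ ∑_{i ≤ d} C(k|S|, i) ≤ (e·k|S|/d)^d` as soon as `d ≤ |S|`.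
Taking logarithms and bounding `log (|S|/2d) ≤ |S|/2d - 1` gives `|S|·(log 2 - 1/2) ≤ d·log (2k)`,
and `log 2 - 1/2 > 1/6`.
-/

section Traces

variable {Z : Type*}

open Classical in
def trace (F : Set (Z → Bool)) (S : Finset Z) : Finset (Finset Z) :=
  {T ∈ S.powerset | ∃ f ∈ F, ∀ z ∈ S, (f z = true ↔ z ∈ T)}

lemma mem_trace {F : Set (Z → Bool)} {S T : Finset Z} :
    T ∈ trace F S ↔ T ⊆ S ∧ ∃ f ∈ F, ∀ z ∈ S, (f z = true ↔ z ∈ T) := by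
  classical
  simp only [trace, Finset.mem_filter, Finset.mem_powerset]

lemma Shatters.card_trace {F : Set (Z → Bool)} {S : Finset Z} (hS : Shatters F S) :
    #(trace F S) = 2 ^ #S := by
  rw [← Finset.card_powerset]
  congr 1
  ext T
  simp only [mem_trace, Finset.mem_powerset, and_iff_left_iff_imp]
  exact hS T

lemma shatters_of_shatters_trace [DecidableEq Z] {F : Set (Z → Bool)} {P u : Finset Z}
    (hu : (trace F P).Shatters u) : u ⊆ P ∧ Shatters F u := by
  obtain ⟨A, hA, huA⟩ := hu.exists_superset
  have huP : u ⊆ P := huA.trans (mem_trace.1 hA).1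
  refine ⟨huP, fun T hTu => ?_⟩
  obtain ⟨A, hA, rfl⟩ := hu hTu
  obtain ⟨-, f, hf, hfA⟩ := mem_trace.1 hA
  exact ⟨f, hf, fun z hz => by rw [hfA z (huP hz), Finset.mem_inter, and_iff_right hz]⟩

/-- The Sauer–Shelah lemma for traces. -/
theorem card_trace_le_sum_choose {F : Set (Z → Bool)} {d : ℕ} (hF : VCDimLE F d)
    (P : Finset Z) : #(trace F P) ≤ ∑ i ∈ range (d + 1), (#P).choose i := by
  classical
  have hsub : (trace F P).shatterer ⊆ (range (d + 1)).biUnion P.powersetCard := by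
    intro u hu
    obtain ⟨huP, hFu⟩ := shatters_of_shatters_trace (Finset.mem_shatterer.1 hu)
    exact Finset.mem_biUnion.2 ⟨#u, Finset.mem_range.2 (Nat.lt_succ_of_le (hF u hFu)),
      Finset.mem_powersetCard.2 ⟨huP, rfl⟩⟩
  calc #(trace F P) ≤ #(trace F P).shatterer := Finset.card_le_card_shatterer _
    _ ≤ #((range (d + 1)).biUnion P.powersetCard) := Finset.card_le_card hsub
    _ ≤ ∑ i ∈ range (d + 1), #(P.powersetCard i) := Finset.card_biUnion_le
    _ = ∑ i ∈ range (d + 1), (#P).choose i := by simp only [Finset.card_powersetCard]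

end Traces

lemma sum_range_choose_mul_pow_le_exp {n d : ℕ} (hdn : d ≤ n) {x : ℝ} (hx₀ : 0 ≤ x)
    (hx₁ : x ≤ 1) :
    (∑ i ∈ range (d + 1), (n.choose i : ℝ)) * x ^ d ≤ Real.exp (n * x) := by
  calc (∑ i ∈ range (d + 1), (n.choose i : ℝ)) * x ^ d
      ≤ ∑ i ∈ range (d + 1), (n.choose i : ℝ) * x ^ i := by
        rw [Finset.sum_mul]
        refine Finset.sum_le_sum fun i hi => mul_le_mul_of_nonneg_left ?_ (Nat.cast_nonneg _)
        exact pow_le_pow_of_le_one hx₀ hx₁ (Nat.lt_succ_iff.1 (Finset.mem_range.1 hi))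
    _ ≤ ∑ i ∈ range (n + 1), (n.choose i : ℝ) * x ^ i :=
        Finset.sum_le_sum_of_subset_of_nonneg (Finset.range_subset_range.2 (by omega))
          fun i _ _ => by positivity
    _ = (x + 1) ^ n := by rw [add_pow]; simp only [one_pow, mul_one, mul_comm]
    _ ≤ Real.exp x ^ n := by gcongr; linarith [Real.add_one_le_exp x]
    _ = Real.exp (n * x) := by rw [Real.exp_nat_mul]

theorem sum_range_choose_le_exp_mul_div_pow {n d : ℕ} (hd : 0 < d) (hdn : d ≤ n) :
    ∑ i ∈ range (d + 1), (n.choose i : ℝ) ≤ (Real.exp 1 * n / d) ^ d := by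
  have hn : (0 : ℝ) < n := by exact_mod_cast hd.trans_le hdn
  have hx : (0 : ℝ) < d / n := by positivity
  have h := sum_range_choose_mul_pow_le_exp hdn hx.le
    (div_le_one_of_le₀ (by exact_mod_cast hdn) hn.le)
  rw [mul_div_cancel₀ _ hn.ne', ← Real.exp_one_pow, ← le_div_iff₀ (by positivity)] at h
  rwa [mul_div_assoc, mul_pow, ← inv_div, inv_pow, ← div_eq_mul_inv]

section Bags

variable {X : Type*} {k : ℕ}

open Classical in
def bagPoints (S : Finset ((Fin k → X) × ℝ)) : Finset X :=
  S.biUnion fun s => univ.image s.1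

lemma mem_bagPoints {S : Finset ((Fin k → X) × ℝ)} {s : (Fin k → X) × ℝ} (hs : s ∈ S)
    (j : Fin k) : s.1 j ∈ bagPoints S := by
  classical
  exact Finset.mem_biUnion.2 ⟨s, hs, Finset.mem_image_of_mem _ (Finset.mem_univ j)⟩

lemma card_bagPoints_le (S : Finset ((Fin k → X) × ℝ)) : #(bagPoints S) ≤ k * #S := by
  classical
  calc #(bagPoints S) ≤ ∑ s ∈ S, #(univ.image s.1) := Finset.card_biUnion_le
    _ ≤ ∑ _s ∈ S, k := Finset.sum_le_sum fun s _ => Finset.card_image_le.trans_eq (by simp)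
    _ = k * #S := by rw [Finset.sum_const, smul_eq_mul, mul_comm]

/-- On `S`, `g_f` only depends on the trace of `f` on the points of the bags of `S`. -/
theorem card_trace_mismatchClass_le (F : Set (X → Bool)) (S : Finset ((Fin k → X) × ℝ)) :
    #(trace (mismatchClass F k) S) ≤ #(trace F (bagPoints S)) := by
  classical
  let labelOn : Finset X → Finset ((Fin k → X) × ℝ) := fun A =>
    {z ∈ S | (∑ j, bval (decide (z.1 j ∈ A))) / (k : ℝ) ≠ z.2}
  refine (Finset.card_le_card fun T hT => ?_).trans
    (Finset.card_image_le (s := trace F (bagPoints S)) (f := labelOn))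
  obtain ⟨hTS, g, ⟨f, hf, rfl⟩, hgT⟩ := mem_trace.1 hT
  refine Finset.mem_image.2 ⟨{x ∈ bagPoints S | f x = true},
    mem_trace.2 ⟨Finset.filter_subset _ _, f, hf, fun x hx => by simp [hx]⟩, ?_⟩
  ext z
  by_cases hz : z ∈ S
  · have hsum : ∑ j, bval (decide (z.1 j ∈ {x ∈ bagPoints S | f x = true})) =
        ∑ j, bval (f (z.1 j)) :=
      Finset.sum_congr rfl fun j _ => by simp [mem_bagPoints hz j]
    rw [Finset.mem_filter, and_iff_right hz, hsum, ← hgT z hz, decide_eq_true_iff]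
  · simp only [labelOn, Finset.mem_filter, hz, false_and, false_iff]
    exact fun h => hz (hTS h)

end Bags

lemma mul_log_two_sub_half_le {m d : ℕ} {k : ℝ} (hd : 0 < d) (hm : 0 < m) (hk : 0 < k)
    (h : (2 : ℝ) ^ m ≤ (Real.exp 1 * k * m / d) ^ d) :
    m * (Real.log 2 - 1 / 2) ≤ d * Real.log (2 * k) := by
  have hd' : (0 : ℝ) < d := by exact_mod_cast hd
  have hm' : (0 : ℝ) < m := by exact_mod_cast hm
  have hlog := Real.log_le_log (by positivity) h
  rw [Real.log_pow, Real.log_pow] at hlog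
  have hsplit : Real.exp 1 * k * m / d = Real.exp 1 * (2 * k * (m / (2 * d))) := by
    field_simp
  -- `log x ≤ x - 1` at `x = m / 2d` absorbs the factor `e`.
  have hbase : Real.log (Real.exp 1 * k * m / d) ≤ Real.log (2 * k) + m / (2 * d) := by
    rw [hsplit, Real.log_mul (by positivity) (by positivity), Real.log_exp,
      Real.log_mul (by positivity) (by positivity)]
    linarith [Real.log_le_sub_one_of_pos (x := m / (2 * d)) (by positivity)]
  calc m * (Real.log 2 - 1 / 2) ≤ d * Real.log (Real.exp 1 * k * m / d) - m / 2 := by linarith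
    _ ≤ d * (Real.log (2 * k) + m / (2 * d)) - m / 2 := by gcongr
    _ = d * Real.log (2 * k) := by field_simp; ring

theorem vc_dimension_mismatch_class :
    ∃ C : ℝ, 0 < C ∧
      ∀ (X : Type) (F : Set (X → Bool)) (d k : ℕ), 1 ≤ d → 1 ≤ k →
        VCDimLE F d →
        ∀ S : Finset ((Fin k → X) × ℝ), Shatters (mismatchClass F k) S →
          (S.card : ℝ) ≤ C * (d : ℝ) * Real.log (2 * (k : ℝ)) := by
  refine ⟨6, by norm_num, fun X F d k hd hk hF S hS => ?_⟩
  have hk' : (1 : ℝ) ≤ k := by exact_mod_cast hk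
  have hlog2 : 1 / 6 < Real.log 2 - 1 / 2 := by linarith [Real.log_two_gt_d9]
  have hlog2k : Real.log 2 ≤ Real.log (2 * k) := Real.log_le_log (by norm_num) (by linarith)
  rcases le_total #S d with hSd | hdS
  · have : (#S : ℝ) ≤ d := by exact_mod_cast hSd
    nlinarith
  have hcount : 2 ^ #S ≤ ∑ i ∈ range (d + 1), (k * #S).choose i := calc
    2 ^ #S = #(trace (mismatchClass F k) S) := hS.card_trace.symm
    _ ≤ #(trace F (bagPoints S)) := card_trace_mismatchClass_le F S
    _ ≤ ∑ i ∈ range (d + 1), (#(bagPoints S)).choose i := card_trace_le_sum_choose hF _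
    _ ≤ ∑ i ∈ range (d + 1), (k * #S).choose i := by gcongr; exact card_bagPoints_le S
  have hpow : (2 : ℝ) ^ #S ≤ (Real.exp 1 * k * #S / d) ^ d := calc
    (2 : ℝ) ^ #S ≤ ∑ i ∈ range (d + 1), ((k * #S).choose i : ℝ) := by exact_mod_cast hcount
    _ ≤ (Real.exp 1 * ↑(k * #S) / d) ^ d :=
      sum_range_choose_le_exp_mul_div_pow hd (hdS.trans (Nat.le_mul_of_pos_left _ hk))
    _ = (Real.exp 1 * k * #S / d) ^ d := by push_cast; ring
  have hlog := mul_log_two_sub_half_le hd (hd.trans hdS) (by positivity) hpow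
  nlinarith

end LLP
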